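/- arXiv:1910.00472 — 6 statements merged into one kernel-verified Lean document; each statement's English description precedes it below -/
import Mathlib

section
/- Let H be a binary r×n parity-check matrix in which every column has weight at least v, and suppose any two distinct columns of H have supports intersecting in at most δ positions. Then majority-logic decoding (flipping bit i iff more than half of its v_i parity checks are unsatisfied) correctly recovers any error vector e of Hamming weight t ≤ ⌊v/(2δ)⌋ from the syndrome s = eH^T. Concretely: for every error vector e with wt(e) ≤ ⌊v/(2δ)⌋, every index i in the support of e has more than v_i/2 unsatisfied checks among the rows in the support of column i, and every index i outside the support of e has at most v_i/2 unsatisfied checks. -/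
open Finset

/-- Support of column `i` of `H`: the set of rows where column `i` has a 1. -/
def colSupp {r n : ℕ} (H : Matrix (Fin r) (Fin n) (ZMod 2)) (i : Fin n) : Finset (Fin r) :=
  Finset.univ.filter (fun l => H l i = 1)

/-- Weight of column `i`. -/
def colWt {r n : ℕ} (H : Matrix (Fin r) (Fin n) (ZMod 2)) (i : Fin n) : ℕ :=
  (colSupp H i).card

/-- Syndrome `s = e Hᵀ`. -/
def synd {r n : ℕ} (H : Matrix (Fin r) (Fin n) (ZMod 2)) (e : Fin n → ZMod 2)
    (l : Fin r) : ZMod 2 :=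
  ∑ j, e j * H l j

/-- Number of unsatisfied parity checks involving bit `i`. -/
def sigma {r n : ℕ} (H : Matrix (Fin r) (Fin n) (ZMod 2)) (e : Fin n → ZMod 2)
    (i : Fin n) : ℕ :=
  ((colSupp H i).filter (fun l => synd H e l = 1)).card

/-- Hamming weight of a vector. -/
def wt {n : ℕ} (e : Fin n → ZMod 2) : ℕ :=
  (Finset.univ.filter (fun j => e j = 1)).card

lemma synd_eq {r n : ℕ} (H : Matrix (Fin r) (Fin n) (ZMod 2)) (e : Fin n → ZMod 2) (l : Fin r) :
    synd H e l = ∑ j ∈ Finset.univ.filter (fun j => e j = 1), H l j := by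
  unfold synd
  rw [← Finset.sum_filter_of_ne (p := fun j => e j = 1)
    (by
      intro x _ hx
      by_contra h
      have h0 : e x = 0 := by
        have : ∀ y : ZMod 2, y ≠ 1 → y = 0 := by decide
        exact this _ h
      simp [h0] at hx)]
  exact Finset.sum_congr rfl (fun j hj => by
    have : e j = 1 := (Finset.mem_filter.1 hj).2
    rw [this, one_mul])

lemma key_bound {r n : ℕ} (H : Matrix (Fin r) (Fin n) (ZMod 2)) (δ : ℕ)
    (hint : ∀ i j, i ≠ j → (colSupp H i ∩ colSupp H j).card ≤ δ)
    (i : Fin n) (E : Finset (Fin n)) (hiE : i ∉ E) :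
    ((colSupp H i).filter (fun l => ¬ (∑ j ∈ E, H l j = 0))).card ≤ δ * E.card := by
  have hsub : (colSupp H i).filter (fun l => ¬ (∑ j ∈ E, H l j = 0)) ⊆
      E.biUnion (fun j => colSupp H i ∩ colSupp H j) := by
    intro l hl
    obtain ⟨hl1, hl2⟩ := Finset.mem_filter.1 hl
    have hex : ∃ j ∈ E, H l j ≠ 0 := by
      by_contra h
      push_neg at h
      exact hl2 (Finset.sum_eq_zero h)
    obtain ⟨j, hj, hne⟩ := hex
    refine Finset.mem_biUnion.2 ⟨j, hj, Finset.mem_inter.2 ⟨hl1, ?_⟩⟩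
    have h1 : H l j = 1 := by
      have : ∀ y : ZMod 2, y ≠ 0 → y = 1 := by decide
      exact this _ hne
    simp [colSupp, h1]
  calc ((colSupp H i).filter (fun l => ¬ (∑ j ∈ E, H l j = 0))).card
      ≤ (E.biUnion (fun j => colSupp H i ∩ colSupp H j)).card := Finset.card_le_card hsub
    _ ≤ ∑ j ∈ E, (colSupp H i ∩ colSupp H j).card := Finset.card_biUnion_le
    _ ≤ ∑ _j ∈ E, δ := Finset.sum_le_sum (fun j hj =>
        hint i j (by rintro rfl; exact hiE hj))
    _ = δ * E.card := by rw [Finset.sum_const, smul_eq_mul, mul_comm]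

/-- Majority-logic decoding corrects all error patterns of weight at most `⌊v/(2δ)⌋`. -/
theorem stmt0 {r n : ℕ} (H : Matrix (Fin r) (Fin n) (ZMod 2)) (v δ : ℕ) (hδ : 1 ≤ δ)
    (hcol : ∀ i, v ≤ colWt H i)
    (hint : ∀ i j, i ≠ j → (colSupp H i ∩ colSupp H j).card ≤ δ)
    (e : Fin n → ZMod 2) (he : wt e ≤ v / (2 * δ)) :
    (∀ i, e i = 1 → colWt H i < 2 * sigma H e i) ∧
    (∀ i, e i = 0 → 2 * sigma H e i ≤ colWt H i) := by
  have h2δ : 0 < 2 * δ := by omega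
  have ht : wt e * (2 * δ) ≤ v := (Nat.le_div_iff_mul_le h2δ).1 he
  set S : Finset (Fin n) := Finset.univ.filter (fun j => e j = 1) with hS
  constructor
  · -- e i = 1
    intro i hi
    have hiS : i ∈ S := by simp [hS, hi]
    set E : Finset (Fin n) := S.erase i with hE
    have hiE : i ∉ E := Finset.notMem_erase i S
    have hins : insert i E = S := Finset.insert_erase hiS
    have hcardE : E.card = wt e - 1 := by
      rw [hE, Finset.card_erase_of_mem hiS]; rfl
    have hwt1 : 1 ≤ wt e := Finset.card_pos.2 ⟨i, hiS⟩
    -- on colSupp H i, synd = 1 + ∑_{j∈E} H l j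
    have hsynd : ∀ l ∈ colSupp H i, (synd H e l = 1 ↔ (∑ j ∈ E, H l j = 0)) := by
      intro l hl
      have hHli : H l i = 1 := (Finset.mem_filter.1 hl).2
      rw [synd_eq, ← hS, ← hins, Finset.sum_insert hiE, hHli]
      constructor
      · intro h
        have : ∀ y : ZMod 2, 1 + y = 1 → y = 0 := by decide
        exact this _ h
      · intro h; rw [h, add_zero]
    have hσ : sigma H e i = ((colSupp H i).filter (fun l => ∑ j ∈ E, H l j = 0)).card := by
      unfold sigma
      congr 1
      exact Finset.filter_congr (fun l hl => by simp [hsynd l hl])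
    have hsplit : ((colSupp H i).filter (fun l => ∑ j ∈ E, H l j = 0)).card +
        ((colSupp H i).filter (fun l => ¬ (∑ j ∈ E, H l j = 0))).card = colWt H i :=
      Finset.card_filter_add_card_filter_not _
    have hkey := key_bound H δ hint i E hiE
    have hv := hcol i
    rw [hσ]
    rw [hcardE] at hkey
    obtain ⟨t, hte⟩ : ∃ t, wt e = t + 1 := ⟨wt e - 1, by omega⟩
    have hlin : 2 * (δ * (wt e - 1)) + 2 * δ = wt e * (2 * δ) := by
      rw [hte]; simp only [Nat.add_sub_cancel]; ring
    omega
  · -- e i = 0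
    intro i hi
    have hiS : i ∉ S := by simp [hS, hi]
    have hsynd : ∀ l ∈ colSupp H i, synd H e l = 1 → ¬ (∑ j ∈ S, H l j = 0) := by
      intro l _ h1 h0
      rw [synd_eq, ← hS, h0] at h1
      exact absurd h1 (by decide)
    have hσ : sigma H e i ≤ ((colSupp H i).filter (fun l => ¬ (∑ j ∈ S, H l j = 0))).card := by
      apply Finset.card_le_card
      intro l hl
      obtain ⟨hl1, hl2⟩ := Finset.mem_filter.1 hl
      exact Finset.mem_filter.2 ⟨hl1, hsynd l hl1 hl2⟩
    have hkey := key_bound H δ hint i S hiS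
    have hv := hcol i
    have hcardS : S.card = wt e := rfl
    rw [hcardS] at hkey
    have hlin : 2 * (δ * wt e) = wt e * (2 * δ) := by ring
    omega
end

section
/- Let H be a binary parity-check matrix whose associated Tanner graph has girth greater than 4 (equivalently, any two distinct columns of H share at most one common nonzero row position), and suppose every column of H has weight at least v*. Then majority-logic decoding corrects all error vectors of weight t ≤ ⌊v*/2⌋. -/
open Finset

/-- Adjacency matrix entry `γ_{i,j} = |supp(h_i) ∩ supp(h_j)|` for `i ≠ j`, `0` on diagonal. -/
def gam {r n : ℕ} (H : Matrix (Fin r) (Fin n) (ZMod 2)) (i j : Fin n) : ℕ :=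
  if i = j then 0 else (colSupp H i ∩ colSupp H j).card

lemma zmod2_cases (x : ZMod 2) : x = 0 ∨ x = 1 := by revert x; decide

/-- Girth > 4 (pairwise column intersections ≤ 1) and min column weight `v*` gives
majority-logic correction of all errors of weight up to `⌊v*/2⌋`. -/
theorem stmt1 {r n : ℕ} (H : Matrix (Fin r) (Fin n) (ZMod 2)) (vstar : ℕ)
    (hcol : ∀ i, vstar ≤ colWt H i)
    (hg : ∀ i j, i ≠ j → (colSupp H i ∩ colSupp H j).card ≤ 1)
    (e : Fin n → ZMod 2) (he : wt e ≤ vstar / 2) :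
    (∀ i, e i = 1 → colWt H i < 2 * sigma H e i) ∧
    (∀ i, e i = 0 → 2 * sigma H e i ≤ colWt H i) := by
  classical
  set E : Finset (Fin n) := Finset.univ.filter (fun j => e j = 1) with hE
  have hEcard : E.card = wt e := rfl
  have h2t : 2 * wt e ≤ vstar := by
    have := Nat.mul_le_mul_left 2 he
    calc 2 * wt e ≤ 2 * (vstar / 2) := this
      _ ≤ vstar := Nat.mul_div_le vstar 2
  have hsynd : ∀ l, synd H e l = ∑ j ∈ E, H l j := by
    intro l
    rw [synd, ← Finset.sum_filter_add_sum_filter_not Finset.univ (fun j => e j = 1)]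
    have h2 : ∑ j ∈ Finset.univ.filter (fun j => ¬ e j = 1), e j * H l j = 0 := by
      apply Finset.sum_eq_zero; intro j hj
      simp only [Finset.mem_filter] at hj
      rcases zmod2_cases (e j) with h | h
      · rw [h, zero_mul]
      · exact absurd h hj.2
    rw [h2, add_zero]
    apply Finset.sum_congr rfl
    intro j hj
    simp only [Finset.mem_filter] at hj
    rw [hj.2, one_mul]
  constructor
  · intro i hei
    have hiE : i ∈ E := by simp [hE, hei]
    have htpos : 1 ≤ wt e := by
      rw [← hEcard]; exact Finset.card_pos.mpr ⟨i, hiE⟩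
    -- bad rows
    set B := (colSupp H i).filter (fun l => ¬ synd H e l = 1) with hB
    have hsplit : sigma H e i + B.card = colWt H i := by
      rw [sigma, hB, colWt]
      exact Finset.card_filter_add_card_filter_not _
    have hsub : B ⊆ (E.erase i).biUnion (fun j => colSupp H i ∩ colSupp H j) := by
      intro l hl
      simp only [hB, Finset.mem_filter] at hl
      obtain ⟨hlS, hlsynd⟩ := hl
      have hHli : H l i = 1 := by
        simpa [colSupp] using hlS
      have hsum : synd H e l = 1 + ∑ j ∈ E.erase i, H l j := by
        rw [hsynd l, ← Finset.add_sum_erase E _ hiE, hHli]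
      have hrest : ∑ j ∈ E.erase i, H l j ≠ 0 := by
        intro h0
        apply hlsynd
        rw [hsum, h0, add_zero]
      obtain ⟨j, hjm, hjne⟩ := Finset.exists_ne_zero_of_sum_ne_zero hrest
      have hHlj : H l j = 1 := by
        rcases zmod2_cases (H l j) with h | h
        · exact absurd h hjne
        · exact h
      apply Finset.mem_biUnion.mpr
      exact ⟨j, hjm, Finset.mem_inter.mpr ⟨hlS, by simp [colSupp, hHlj]⟩⟩
    have hBcard : B.card ≤ wt e - 1 := by
      calc B.card ≤ ((E.erase i).biUnion (fun j => colSupp H i ∩ colSupp H j)).card :=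
            Finset.card_le_card hsub
        _ ≤ ∑ j ∈ E.erase i, (colSupp H i ∩ colSupp H j).card := Finset.card_biUnion_le
        _ ≤ ∑ _j ∈ E.erase i, 1 := by
            apply Finset.sum_le_sum
            intro j hj
            exact hg i j (Ne.symm (Finset.ne_of_mem_erase hj))
        _ = (E.erase i).card := by simp
        _ = wt e - 1 := by rw [Finset.card_erase_of_mem hiE, hEcard]
    have hv := hcol i
    omega
  · intro i hei
    have hiE : i ∉ E := by simp [hE, hei]
    have hsub : ((colSupp H i).filter (fun l => synd H e l = 1)) ⊆
        E.biUnion (fun j => colSupp H i ∩ colSupp H j) := by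
      intro l hl
      simp only [Finset.mem_filter] at hl
      obtain ⟨hlS, hlsynd⟩ := hl
      have hrest : ∑ j ∈ E, H l j ≠ 0 := by
        rw [← hsynd l, hlsynd]; exact one_ne_zero
      obtain ⟨j, hjm, hjne⟩ := Finset.exists_ne_zero_of_sum_ne_zero hrest
      have hHlj : H l j = 1 := by
        rcases zmod2_cases (H l j) with h | h
        · exact absurd h hjne
        · exact h
      apply Finset.mem_biUnion.mpr
      exact ⟨j, hjm, Finset.mem_inter.mpr ⟨hlS, by simp [colSupp, hHlj]⟩⟩
    have hscard : sigma H e i ≤ wt e := by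
      calc sigma H e i ≤ (E.biUnion (fun j => colSupp H i ∩ colSupp H j)).card :=
            Finset.card_le_card hsub
        _ ≤ ∑ j ∈ E, (colSupp H i ∩ colSupp H j).card := Finset.card_biUnion_le
        _ ≤ ∑ _j ∈ E, 1 := by
            apply Finset.sum_le_sum
            intro j hj
            apply hg i j
            intro h; exact hiE (h ▸ hj)
        _ = E.card := by simp
        _ = wt e := hEcard
    have hv := hcol i
    omega
end

section
/- Let H ∈ F_2^{r×n} with all column weights at least v*. Define δ(H,z) as the maximum over i of the maximal weight of the XOR of z columns (excluding column i) of the partial matrix H^{(i)} formed by the rows of H indexed by supp(h_i). If t is an integer with v* > δ(H,t) + δ(H,t−1), then a single iteration of bit-flipping decoding with per-bit thresholds b_i ∈ [δ(H,t)+1, v_i − δ(H,t−1)] correctly recovers every error vector of weight exactly t: every errored bit has σ_i ≥ b_i and every error-free bit has σ_i < b_i. -/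
open Finset

/-- `δ^{(i)}(H^{(i)}, z)`: max weight, restricted to the rows in `supp(h_i)`, of the XOR of
`z` columns of `H` other than column `i`. -/
def deltaI {r n : ℕ} (H : Matrix (Fin r) (Fin n) (ZMod 2)) (i : Fin n) (z : ℕ) : ℕ :=
  (Finset.powersetCard z (Finset.univ.erase i)).sup
    (fun M => ((colSupp H i).filter (fun l => (∑ j ∈ M, H l j) = 1)).card)

/-- Maximum column intersection of order `z`. -/
def delta {r n : ℕ} (H : Matrix (Fin r) (Fin n) (ZMod 2)) (z : ℕ) : ℕ :=
  Finset.univ.sup (fun i => deltaI H i z)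

/-- If `v* > δ(H,t) + δ(H,t−1)` then one bit-flipping iteration with thresholds
`b_i ∈ [δ(H,t)+1, v_i − δ(H,t−1)]` corrects every error vector of weight exactly `t`. -/
theorem stmt2 {r n : ℕ} (H : Matrix (Fin r) (Fin n) (ZMod 2)) (vstar t : ℕ)
    (hcol : ∀ i, vstar ≤ colWt H i)
    (hd : delta H t + delta H (t - 1) < vstar)
    (b : Fin n → ℕ)
    (hb : ∀ i, delta H t + 1 ≤ b i ∧ b i ≤ colWt H i - delta H (t - 1))
    (e : Fin n → ZMod 2) (he : wt e = t) :
    (∀ i, e i = 1 → b i ≤ sigma H e i) ∧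
    (∀ i, e i = 0 → sigma H e i < b i) := by
  set E := Finset.univ.filter (fun j => e j = 1) with hE
  have hsynd : ∀ l, synd H e l = ∑ j ∈ E, H l j := by
    intro l
    unfold synd
    rw [hE, Finset.sum_filter]
    refine Finset.sum_congr rfl fun j _ => ?_
    have h : ∀ x y : ZMod 2, x * y = if x = 1 then y else 0 := by decide
    exact h _ _
  have hcardE : E.card = t := he
  constructor
  · intro i hi
    have hiE : i ∈ E := by simp [hE, hi]
    set M := E.erase i with hM
    have hMmem : M ∈ Finset.powersetCard (t-1) (Finset.univ.erase i) := by
      rw [Finset.mem_powersetCard]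
      constructor
      · intro x hx
        rw [Finset.mem_erase] at hx ⊢
        exact ⟨hx.1, Finset.mem_univ x⟩
      · rw [hM, Finset.card_erase_of_mem hiE, hcardE]
    have key : (colSupp H i).filter (fun l => synd H e l = 1)
        = (colSupp H i).filter (fun l => ¬ ((∑ j ∈ M, H l j) = 1)) := by
      apply Finset.filter_congr
      intro l hl
      have hli : H l i = 1 := by simpa [colSupp] using hl
      have hsum : synd H e l = H l i + ∑ j ∈ M, H l j := by
        rw [hsynd, ← Finset.add_sum_erase E _ hiE]
      rw [hsum, hli]
      have h : ∀ x : ZMod 2, (1 + x = 1) ↔ ¬ (x = 1) := by decide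
      exact h _
    have hc : ((colSupp H i).filter (fun l => (∑ j ∈ M, H l j) = 1)).card ≤ delta H (t-1) := by
      calc ((colSupp H i).filter (fun l => (∑ j ∈ M, H l j) = 1)).card
          ≤ deltaI H i (t-1) := Finset.le_sup (f := fun M => ((colSupp H i).filter (fun l => (∑ j ∈ M, H l j) = 1)).card) hMmem
        _ ≤ delta H (t-1) := Finset.le_sup (f := fun i => deltaI H i (t-1)) (Finset.mem_univ i)
    have hcompl := Finset.card_filter_add_card_filter_not
      (s := colSupp H i) (p := fun l => (∑ j ∈ M, H l j) = 1)
    have hσ : sigma H e i + ((colSupp H i).filter (fun l => (∑ j ∈ M, H l j) = 1)).card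
        = colWt H i := by
      unfold sigma colWt
      rw [key]
      omega
    have hbi := (hb i).2
    have hdcol : delta H (t-1) ≤ colWt H i := by
      have := hcol i; omega
    omega
  · intro i hi
    have hiE : i ∉ E := by simp [hE, hi]
    have hEmem : E ∈ Finset.powersetCard t (Finset.univ.erase i) := by
      rw [Finset.mem_powersetCard]
      exact ⟨fun x hx => Finset.mem_erase.2 ⟨fun h => hiE (h ▸ hx), Finset.mem_univ x⟩, hcardE⟩
    have hle : sigma H e i ≤ delta H t := by
      unfold sigma
      have heq : ((colSupp H i).filter (fun l => synd H e l = 1)).card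
          = ((colSupp H i).filter (fun l => (∑ j ∈ E, H l j) = 1)).card := by
        congr 1
        apply Finset.filter_congr
        intro l _
        rw [hsynd]
      rw [heq]
      calc ((colSupp H i).filter (fun l => (∑ j ∈ E, H l j) = 1)).card
          ≤ deltaI H i t := Finset.le_sup (f := fun M => ((colSupp H i).filter (fun l => (∑ j ∈ M, H l j) = 1)).card) hEmem
        _ ≤ delta H t := Finset.le_sup (f := fun i => deltaI H i t) (Finset.mem_univ i)
    have := (hb i).1
    omega
end

section
/- Let H ∈ F_2^{r×n}, e ∈ F_2^n an error vector with e_i = 1, and s = eH^T. Then the number σ_i of unsatisfied parity checks involving bit i satisfies σ_i ≥ v_i − Σ_{j∈supp(e)\{i}} γ_{i,j}, where v_i is the weight of column i and γ_{i,j} = |supp(h_i) ∩ supp(h_j)|. -/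
open Finset

/-- If `e_i = 1` then `σ_i ≥ v_i − Σ_{j ∈ supp(e)\{i}} γ_{i,j}`. -/
theorem stmt5 {r n : ℕ} (H : Matrix (Fin r) (Fin n) (ZMod 2))
    (e : Fin n → ZMod 2) (i : Fin n) (hei : e i = 1) :
    colWt H i - ∑ j ∈ (Finset.univ.filter (fun j => e j = 1)).erase i, gam H i j
      ≤ sigma H e i := by
  classical
  set S := (Finset.univ.filter (fun j => e j = 1)).erase i with hS
  set bad := (colSupp H i).filter (fun l => ¬ synd H e l = 1) with hbad
  have hsplit : colWt H i = sigma H e i + bad.card := by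
    rw [colWt, sigma, hbad]
    exact (Finset.card_filter_add_card_filter_not (fun l => synd H e l = 1)).symm
  have hsub : bad ⊆ S.biUnion (fun j => colSupp H i ∩ colSupp H j) := by
    intro l hl
    rw [hbad, Finset.mem_filter] at hl
    obtain ⟨hli, hs⟩ := hl
    have hHli : H l i = 1 := (Finset.mem_filter.mp hli).2
    by_contra hnot
    simp only [Finset.mem_biUnion, not_exists, not_and] at hnot
    apply hs
    rw [synd]
    have : ∀ j, e j * H l j = if j = i then 1 else 0 := by
      intro j
      by_cases hji : j = i
      · simp [hji, hei, hHli]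
      · simp only [if_neg hji]
        by_cases hej : e j = 1
        · have hjS : j ∈ S := by
            rw [hS]
            exact Finset.mem_erase.mpr ⟨hji, Finset.mem_filter.mpr ⟨Finset.mem_univ _, hej⟩⟩
          have := hnot j hjS
          have hHlj : H l j ≠ 1 := by
            intro h
            exact this (Finset.mem_inter.mpr ⟨hli, Finset.mem_filter.mpr ⟨Finset.mem_univ _, h⟩⟩)
          have h0 : H l j = 0 := by
            have h2 : ∀ x : ZMod 2, x ≠ 1 → x = 0 := by decide
            exact h2 _ hHlj
          simp [h0]
        · have h0 : e j = 0 := by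
            have h2 : ∀ x : ZMod 2, x ≠ 1 → x = 0 := by decide
            exact h2 _ hej
          simp [h0]
    simp only [this]
    simp
  have hcard : bad.card ≤ ∑ j ∈ S, gam H i j := by
    calc bad.card ≤ (S.biUnion (fun j => colSupp H i ∩ colSupp H j)).card :=
          Finset.card_le_card hsub
      _ ≤ ∑ j ∈ S, (colSupp H i ∩ colSupp H j).card := Finset.card_biUnion_le
      _ = ∑ j ∈ S, gam H i j := by
          refine Finset.sum_congr rfl (fun j hj => ?_)
          rw [gam, if_neg]
          intro h
          exact (Finset.mem_erase.mp hj).1 h.symm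
  omega
end

section
/- Let H ∈ F_2^{r×n}, e ∈ F_2^n with e_i = 0, and s = eH^T. Then σ_i ≤ Σ_{j∈supp(e)} γ_{i,j}, where σ_i is the number of unsatisfied parity checks involving bit i and γ_{i,j} = |supp(h_i) ∩ supp(h_j)|. -/
open Finset

/-- If `e_i = 0` then `σ_i ≤ Σ_{j ∈ supp(e)} γ_{i,j}`. -/
theorem stmt6 {r n : ℕ} (H : Matrix (Fin r) (Fin n) (ZMod 2))
    (e : Fin n → ZMod 2) (i : Fin n) (hei : e i = 0) :
    sigma H e i ≤ ∑ j ∈ Finset.univ.filter (fun j => e j = 1), gam H i j := by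
  classical
  have hzo : ∀ x : ZMod 2, x ≠ 1 → x = 0 := by decide
  have hsub : (colSupp H i).filter (fun l => synd H e l = 1) ⊆
      (Finset.univ.filter (fun j => e j = 1)).biUnion
        (fun j => colSupp H i ∩ colSupp H j) := by
    intro l hl
    simp only [mem_filter, colSupp, mem_univ, true_and] at hl
    obtain ⟨hHi, hs⟩ := hl
    have : ∃ j, e j = 1 ∧ H l j = 1 := by
      by_contra h
      push_neg at h
      have hz : ∀ j, e j * H l j = 0 := by
        intro j
        by_cases hj : e j = 1
        · rw [hj, one_mul]; exact hzo _ (h j hj)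
        · rw [hzo _ hj, zero_mul]
      have : synd H e l = 0 := Finset.sum_eq_zero fun j _ => hz j
      rw [hs] at this; exact one_ne_zero this
    obtain ⟨j, hej, hHj⟩ := this
    simp only [mem_biUnion, mem_filter, mem_univ, true_and, mem_inter, colSupp]
    exact ⟨j, hej, hHi, hHj⟩
  calc sigma H e i ≤ ((Finset.univ.filter (fun j => e j = 1)).biUnion
        (fun j => colSupp H i ∩ colSupp H j)).card := Finset.card_le_card hsub
    _ ≤ ∑ j ∈ Finset.univ.filter (fun j => e j = 1),
        (colSupp H i ∩ colSupp H j).card := Finset.card_biUnion_le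
    _ = ∑ j ∈ Finset.univ.filter (fun j => e j = 1), gam H i j := by
        apply Finset.sum_congr rfl
        intro j hj
        simp only [mem_filter] at hj
        have hij : i ≠ j := by rintro rfl; rw [hei] at hj; exact zero_ne_one hj.2
        rw [gam, if_neg hij]
end

section
/- With notation as in the failure-probability bound: if t ≤ t_M where t_M is the largest integer with v* > μ(H,t_M) + μ(H,t_M−1), and the thresholds satisfy b_i ∈ [μ(H,t)+1, v_i − μ(H,t−1)] for all i, then N(γ̃^{(i)}, t−1, v_i − b_i) = 0 and N(γ̃^{(i)}, t, b_i − 1) = 0 for all i; consequently the single-iteration bit-flipping decoder succeeds on every weight-t error vector (P_f = 0). -/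
open Finset

/-- `μ^{(i)}(z)`: the sum of the `z` largest entries of row `i` of `Γ` (excluding entry `i`),
expressed as the maximum over size-`z` index sets of the corresponding sum. -/
def muI {r n : ℕ} (H : Matrix (Fin r) (Fin n) (ZMod 2)) (i : Fin n) (z : ℕ) : ℕ :=
  (Finset.powersetCard z (Finset.univ.erase i)).sup (fun M => ∑ j ∈ M, gam H i j)

/-- Maximum column union of order `z`. -/
def mu {r n : ℕ} (H : Matrix (Fin r) (Fin n) (ZMod 2)) (z : ℕ) : ℕ :=
  Finset.univ.sup (fun i => muI H i z)

/-- `N(γ̃^{(i)}, m, α)`: the number of size-`m` sets `P` of indices `≠ i` with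
`Σ_{j∈P} γ_{i,j} > α`. -/
def Ntil {r n : ℕ} (H : Matrix (Fin r) (Fin n) (ZMod 2)) (i : Fin n) (m α : ℕ) : ℕ :=
  ((Finset.powersetCard m (Finset.univ.erase i)).filter
    (fun P => α < ∑ j ∈ P, gam H i j)).card

/-
A bit `i` outside the error support meets an unsatisfied check only in a check it shares with
some erroneous bit `j`; there are at most `Σ_j γ_{i,j} ≤ μ(H,t)` of those, so `σ_i < b_i`.
An erroneous bit `i` sees unsatisfied every check that it shares with no other erroneous bit;
at most `μ(H,t-1)` of its `v_i` checks are shared, so `σ_i ≥ v_i - μ(H,t-1) ≥ b_i`.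
The counters `N` vanish for the same reason: every sum they count is at most `μ`.
-/

lemma ZMod.two_eq_zero_of_ne_one {x : ZMod 2} (hx : x ≠ 1) : x = 0 := by
  revert x; decide

def errorSupport {n : ℕ} (e : Fin n → ZMod 2) : Finset (Fin n) :=
  univ.filter (fun j => e j = 1)

lemma mem_errorSupport {n : ℕ} {e : Fin n → ZMod 2} {j : Fin n} :
    j ∈ errorSupport e ↔ e j = 1 := by
  simp [errorSupport]

lemma card_errorSupport {n : ℕ} (e : Fin n → ZMod 2) : (errorSupport e).card = wt e := rfl

def sharedChecks {r n : ℕ} (H : Matrix (Fin r) (Fin n) (ZMod 2)) (i : Fin n)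
    (S : Finset (Fin n)) : Finset (Fin r) :=
  colSupp H i ∩ S.biUnion (colSupp H)

section

variable {r n : ℕ} (H : Matrix (Fin r) (Fin n) (ZMod 2))

lemma mem_colSupp {i : Fin n} {l : Fin r} : l ∈ colSupp H i ↔ H l i = 1 := by
  simp [colSupp]

lemma sum_gam_le_mu {i : Fin n} {P : Finset (Fin n)} (hi : i ∉ P) :
    ∑ j ∈ P, gam H i j ≤ mu H P.card := by
  have hP : P ∈ powersetCard P.card (univ.erase i) :=
    mem_powersetCard.2 ⟨fun j hj => mem_erase.2 ⟨fun h => hi (h ▸ hj), mem_univ j⟩, rfl⟩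
  calc ∑ j ∈ P, gam H i j ≤ muI H i P.card := le_sup (f := fun M => ∑ j ∈ M, gam H i j) hP
    _ ≤ mu H P.card := le_sup (f := fun i => muI H i P.card) (mem_univ i)

lemma Ntil_eq_zero_of_mu_le {i : Fin n} {m α : ℕ} (h : mu H m ≤ α) : Ntil H i m α = 0 := by
  rw [Ntil, card_eq_zero, filter_eq_empty_iff]
  intro P hP
  obtain ⟨hPi, rfl⟩ := mem_powersetCard.1 hP
  have hi : i ∉ P := fun hi => by simpa using hPi hi
  exact not_lt.2 ((sum_gam_le_mu H hi).trans h)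

lemma card_sharedChecks_le_mu {i : Fin n} {S : Finset (Fin n)} (hi : i ∉ S) :
    (sharedChecks H i S).card ≤ mu H S.card :=
  calc (sharedChecks H i S).card ≤ ∑ j ∈ S, (colSupp H i ∩ colSupp H j).card := by
        rw [sharedChecks, inter_biUnion]; exact card_biUnion_le
    _ = ∑ j ∈ S, gam H i j :=
        sum_congr rfl fun j hj => by rw [gam, if_neg fun h : i = j => hi (h ▸ hj)]
    _ ≤ mu H S.card := sum_gam_le_mu H hi

lemma synd_eq_sum_errorSupport (e : Fin n → ZMod 2) (l : Fin r) :
    synd H e l = ∑ j ∈ errorSupport e, H l j := by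
  rw [synd, errorSupport, sum_filter]
  refine sum_congr rfl fun j _ => ?_
  by_cases h : e j = 1
  · simp [h]
  · simp [ZMod.two_eq_zero_of_ne_one h]

lemma sigma_le_card_sharedChecks (e : Fin n → ZMod 2) (i : Fin n) :
    sigma H e i ≤ (sharedChecks H i (errorSupport e)).card := by
  refine card_le_card fun l hl => ?_
  obtain ⟨hli, hsynd⟩ := mem_filter.1 hl
  refine mem_inter.2 ⟨hli, ?_⟩
  by_contra hnone
  have hzero : ∀ j ∈ errorSupport e, H l j = 0 := fun j hj =>
    ZMod.two_eq_zero_of_ne_one fun hlj => hnone (mem_biUnion.2 ⟨j, hj, (mem_colSupp H).2 hlj⟩)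
  rw [synd_eq_sum_errorSupport, sum_eq_zero hzero] at hsynd
  exact zero_ne_one hsynd

lemma colWt_sub_card_sharedChecks_le_sigma {e : Fin n → ZMod 2} {i : Fin n} (hi : e i = 1) :
    colWt H i - (sharedChecks H i ((errorSupport e).erase i)).card ≤ sigma H e i := by
  have hiS : i ∈ errorSupport e := mem_errorSupport.2 hi
  have hsub : colSupp H i \ sharedChecks H i ((errorSupport e).erase i) ⊆
      (colSupp H i).filter (fun l => synd H e l = 1) := by
    intro l hl
    obtain ⟨hli, hnot⟩ := mem_sdiff.1 hl
    refine mem_filter.2 ⟨hli, ?_⟩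
    have hothers : ∀ j ∈ (errorSupport e).erase i, H l j = 0 := fun j hj =>
      ZMod.two_eq_zero_of_ne_one fun hlj =>
        hnot (mem_inter.2 ⟨hli, mem_biUnion.2 ⟨j, hj, (mem_colSupp H).2 hlj⟩⟩)
    rw [synd_eq_sum_errorSupport, ← add_sum_erase _ _ hiS, sum_eq_zero hothers,
      (mem_colSupp H).1 hli, add_zero]
  calc colWt H i - (sharedChecks H i ((errorSupport e).erase i)).card
      = (colSupp H i \ sharedChecks H i ((errorSupport e).erase i)).card :=
        (card_sdiff_of_subset inter_subset_left).symm
    _ ≤ sigma H e i := card_le_card hsub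

end

theorem stmt11_general {r n : ℕ} (H : Matrix (Fin r) (Fin n) (ZMod 2)) (t : ℕ)
    (b : Fin n → ℕ)
    (hb : ∀ i, mu H t + 1 ≤ b i ∧ b i ≤ colWt H i - mu H (t - 1)) :
    (∀ i, Ntil H i (t - 1) (colWt H i - b i) = 0 ∧ Ntil H i t (b i - 1) = 0) ∧
    (∀ e : Fin n → ZMod 2, wt e = t →
      (∀ i, e i = 1 → b i ≤ sigma H e i) ∧ (∀ i, e i = 0 → sigma H e i < b i)) := by
  refine ⟨fun i => ?_, fun e he => ⟨fun i hi => ?_, fun i hi => ?_⟩⟩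
  · obtain ⟨hlow, hhigh⟩ := hb i
    exact ⟨Ntil_eq_zero_of_mu_le H (by omega), Ntil_eq_zero_of_mu_le H (by omega)⟩
  · have hcard : ((errorSupport e).erase i).card = t - 1 := by
      rw [card_erase_of_mem (mem_errorSupport.2 hi), card_errorSupport, he]
    have hshared := card_sharedChecks_le_mu H (notMem_erase i (errorSupport e))
    have hsigma := colWt_sub_card_sharedChecks_le_sigma H hi
    rw [hcard] at hshared
    have hupper := (hb i).2
    omega
  · have hiS : i ∉ errorSupport e := fun h => by simp [mem_errorSupport.1 h] at hi
    calc sigma H e i ≤ (sharedChecks H i (errorSupport e)).card :=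
          sigma_le_card_sharedChecks H e i
      _ ≤ mu H t := by simpa [card_errorSupport, he] using card_sharedChecks_le_mu H hiS
      _ < b i := (hb i).1

/-- If `t ≤ t_M` (with `t_M` the largest integer satisfying `v* > μ(H,t_M) + μ(H,t_M−1)`)
and the thresholds lie in `[μ(H,t)+1, v_i − μ(H,t−1)]`, then all the error-set counters
vanish and the single bit-flipping iteration succeeds on every weight-`t` error vector. -/
theorem stmt11 {r n : ℕ} (H : Matrix (Fin r) (Fin n) (ZMod 2)) (vstar t tM : ℕ)
    (hcol : ∀ i, vstar ≤ colWt H i)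
    (htM : mu H tM + mu H (tM - 1) < vstar)
    (htMmax : ∀ t', mu H t' + mu H (t' - 1) < vstar → t' ≤ tM)
    (ht : t ≤ tM)
    (b : Fin n → ℕ)
    (hb : ∀ i, mu H t + 1 ≤ b i ∧ b i ≤ colWt H i - mu H (t - 1)) :
    (∀ i, Ntil H i (t - 1) (colWt H i - b i) = 0 ∧ Ntil H i t (b i - 1) = 0) ∧
    (∀ e : Fin n → ZMod 2, wt e = t →
      (∀ i, e i = 1 → b i ≤ sigma H e i) ∧ (∀ i, e i = 0 → sigma H e i < b i)) :=
  stmt11_general H t b hb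
end
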